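/- arXiv:2605.15651 — 5 statements merged into one kernel-verified Lean document; each statement's English description precedes it below -/
import Mathlib

section
/- The softmax map is 1/2-Lipschitz in the Euclidean norm: for all z, z' ∈ ℝⁿ, ‖σ(z) − σ(z')‖₂ ≤ (1/2)‖z − z'‖₂. -/
open Finset

/-- Softmax as a map on Euclidean space `ℝⁿ` (with the `ℓ²` norm). -/
noncomputable def softmaxE {n : ℕ} (z : EuclideanSpace ℝ (Fin n)) :
    EuclideanSpace ℝ (Fin n) :=
  WithLp.toLp 2 (fun i => Real.exp (z i) / ∑ j, Real.exp (z j))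

/-! The Jacobian of softmax at `z` is `Σ(p) = diag p - p pᵀ` with `p = σ(z)`. For a probability
vector `p` the `i`-th row of `Σ(p)` has absolute sum `p i * ‖eᵢ - p‖₁ = 2 p i (1 - p i) ≤ 1/2`, and
so has every column by symmetry; the Schur test then gives `‖Σ(p)‖₂ ≤ 1/2`, and the mean value
inequality on the convex set `ℝⁿ` turns this into the Lipschitz bound. -/

open Matrix

namespace Matrix

variable {m ι : Type*} [Fintype ι]

theorem sum_sq_mulVec_le_of_sum_abs_le [Fintype m] (A : Matrix m ι ℝ) {R C : ℝ} (hR₀ : 0 ≤ R)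
    (hR : ∀ i, ∑ j, |A i j| ≤ R) (hC : ∀ j, ∑ i, |A i j| ≤ C) (v : ι → ℝ) :
    ∑ i, (A *ᵥ v) i ^ 2 ≤ R * C * ∑ j, v j ^ 2 := by
  have hrow (i : m) : (A *ᵥ v) i ^ 2 ≤ R * ∑ j, |A i j| * v j ^ 2 := by
    have hCS : (A *ᵥ v) i ^ 2 ≤ (∑ j, |A i j|) * ∑ j, |A i j| * v j ^ 2 :=
      sum_sq_le_sum_mul_sum_of_sq_le_mul _ (fun j _ => abs_nonneg _) (fun j _ => by positivity)
        fun j _ => by rw [mul_pow, ← sq_abs (A i j), sq, mul_assoc]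
    exact hCS.trans (mul_le_mul_of_nonneg_right (hR i) (sum_nonneg fun j _ => by positivity))
  calc ∑ i, (A *ᵥ v) i ^ 2 ≤ ∑ i, R * ∑ j, |A i j| * v j ^ 2 := sum_le_sum fun i _ => hrow i
    _ = R * ∑ j, (∑ i, |A i j|) * v j ^ 2 := by rw [← mul_sum, sum_comm]; simp only [sum_mul]
    _ ≤ R * ∑ j, C * v j ^ 2 := by gcongr with j; exact hC j
    _ = R * C * ∑ j, v j ^ 2 := by rw [← mul_sum, mul_assoc]

theorem norm_toEuclideanCLM_le_of_sum_abs_le [DecidableEq ι] (A : Matrix ι ι ℝ) {R C : ℝ}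
    (hR₀ : 0 ≤ R) (hR : ∀ i, ∑ j, |A i j| ≤ R) (hC : ∀ j, ∑ i, |A i j| ≤ C) :
    ‖toEuclideanCLM (𝕜 := ℝ) A‖ ≤ √(R * C) := by
  refine ContinuousLinearMap.opNorm_le_bound _ (Real.sqrt_nonneg _) fun v => ?_
  rw [EuclideanSpace.norm_eq, EuclideanSpace.norm_eq, ← Real.sqrt_mul' _ (by positivity)]
  simpa using Real.sqrt_le_sqrt (sum_sq_mulVec_le_of_sum_abs_le A hR₀ hR hC v)

end Matrix

section SoftmaxJacobian

variable {ι : Type*} [DecidableEq ι]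

noncomputable def softmaxJacobian (p : ι → ℝ) : Matrix ι ι ℝ :=
  diagonal p - vecMulVec p p

theorem softmaxJacobian_apply (p : ι → ℝ) (i j : ι) :
    softmaxJacobian p i j = p i * ((Pi.single i 1 : ι → ℝ) j - p j) := by
  by_cases h : i = j
  · subst h
    simp only [softmaxJacobian, Matrix.sub_apply, diagonal_apply_eq, vecMulVec_apply, Pi.single_eq_same]
    ring
  · simp [softmaxJacobian, vecMulVec_apply, h, Ne.symm h]

theorem softmaxJacobian_apply_comm (p : ι → ℝ) (i j : ι) :
    softmaxJacobian p i j = softmaxJacobian p j i := by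
  rw [softmaxJacobian_apply, softmaxJacobian_apply]
  by_cases h : i = j
  · rw [h]
  · simp only [Pi.single_eq_of_ne h, Pi.single_eq_of_ne (Ne.symm h)]
    ring

theorem softmaxJacobian_mulVec [Fintype ι] (p v : ι → ℝ) (i : ι) :
    (softmaxJacobian p *ᵥ v) i = p i * (v i - p ⬝ᵥ v) := by
  simp only [softmaxJacobian, sub_mulVec, vecMulVec_mulVec, Pi.sub_apply, mulVec_diagonal,
    Pi.smul_apply, MulOpposite.smul_eq_mul_unop, MulOpposite.unop_op]
  ring

theorem sum_abs_single_sub_of_mem_stdSimplex [Fintype ι] {p : ι → ℝ} (hp : p ∈ stdSimplex ℝ ι)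
    (i : ι) : ∑ j, |(Pi.single i 1 : ι → ℝ) j - p j| = 2 * (1 - p i) := by
  have hrest : ∑ j ∈ univ.erase i, p j = 1 - p i := by
    rw [← hp.2, ← add_sum_erase _ _ (mem_univ i), add_sub_cancel_left]
  rw [← add_sum_erase _ _ (mem_univ i), sum_congr rfl fun j hj => by
    rw [Pi.single_eq_of_ne (ne_of_mem_erase hj), zero_sub, abs_neg, abs_of_nonneg (hp.1 j)]]
  rw [hrest, Pi.single_eq_same, abs_of_nonneg (sub_nonneg.2 (mem_Icc_of_mem_stdSimplex hp i).2)]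
  ring

theorem sum_abs_softmaxJacobian_le [Fintype ι] {p : ι → ℝ} (hp : p ∈ stdSimplex ℝ ι) (i : ι) :
    ∑ j, |softmaxJacobian p i j| ≤ 1 / 2 := by
  simp only [softmaxJacobian_apply, abs_mul, abs_of_nonneg (hp.1 i), ← mul_sum,
    sum_abs_single_sub_of_mem_stdSimplex hp]
  nlinarith [sq_nonneg (2 * p i - 1)]

theorem norm_toEuclideanCLM_softmaxJacobian_le [Fintype ι] {p : ι → ℝ}
    (hp : p ∈ stdSimplex ℝ ι) : ‖toEuclideanCLM (𝕜 := ℝ) (softmaxJacobian p)‖ ≤ 1 / 2 := by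
  have h := norm_toEuclideanCLM_le_of_sum_abs_le _ (by norm_num) (sum_abs_softmaxJacobian_le hp)
    fun j => by simpa only [softmaxJacobian_apply_comm p _ j] using sum_abs_softmaxJacobian_le hp j
  rwa [Real.sqrt_mul_self (by norm_num)] at h

end SoftmaxJacobian

section Softmax

variable {n : ℕ}

theorem softmaxE_apply (z : EuclideanSpace ℝ (Fin n)) (i : Fin n) :
    softmaxE z i = Real.exp (z i) / ∑ j, Real.exp (z j) := rfl

theorem softmaxE_mem_stdSimplex [NeZero n] (z : EuclideanSpace ℝ (Fin n)) :
    ⇑(softmaxE z) ∈ stdSimplex ℝ (Fin n) := by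
  have hS : 0 < ∑ j, Real.exp (z j) := sum_pos (fun j _ => Real.exp_pos _) univ_nonempty
  refine ⟨fun i => by rw [softmaxE_apply]; positivity, ?_⟩
  simp only [softmaxE_apply, ← sum_div, div_self hS.ne']

theorem hasFDerivAt_softmaxE_apply (z : EuclideanSpace ℝ (Fin n)) (i : Fin n) :
    HasFDerivAt (fun x => softmaxE x i)
      (PiLp.proj 2 _ i ∘L toEuclideanCLM (𝕜 := ℝ) (softmaxJacobian (softmaxE z))) z := by
  have hS : 0 < ∑ j, Real.exp (z j) := sum_pos (fun j _ => Real.exp_pos _) ⟨i, mem_univ i⟩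
  have hexp (j : Fin n) := (PiLp.hasFDerivAt_apply 2 z j).exp
  have h := (hexp i).fun_mul
    ((hasDerivAt_inv hS.ne').comp_hasFDerivAt z (HasFDerivAt.fun_sum fun j _ => hexp j))
  simp only [softmaxE_apply, div_eq_mul_inv]
  refine h.congr_fderiv (ContinuousLinearMap.ext fun v => ?_)
  simp only [neg_smul, smul_neg, Function.comp_apply, _root_.add_apply, _root_.neg_apply,
    _root_.smul_apply, _root_.sum_apply, PiLp.proj_apply, smul_eq_mul,
    ContinuousLinearMap.comp_apply, ofLp_toEuclideanCLM]
  rw [softmaxJacobian_mulVec]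
  simp only [dotProduct, softmaxE_apply, div_mul_eq_mul_div, ← sum_div]
  field_simp
  ring

theorem hasFDerivAt_softmaxE (z : EuclideanSpace ℝ (Fin n)) :
    HasFDerivAt softmaxE (toEuclideanCLM (𝕜 := ℝ) (softmaxJacobian (softmaxE z))) z :=
  hasFDerivWithinAt_univ.mp <| (hasFDerivWithinAt_piLp 2).mpr fun i =>
    (hasFDerivAt_softmaxE_apply z i).hasFDerivWithinAt

end Softmax

/-- softmax is `1/2`-Lipschitz in the Euclidean norm. -/
theorem softmax_lipschitz_half {n : ℕ} (z z' : EuclideanSpace ℝ (Fin n)) :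
    ‖softmaxE z - softmaxE z'‖ ≤ (1 / 2) * ‖z - z'‖ := by
  cases n with
  | zero => simp [Subsingleton.elim z z']
  | succ n =>
    exact convex_univ.norm_image_sub_le_of_norm_hasFDerivWithin_le
      (fun x _ => (hasFDerivAt_softmaxE x).hasFDerivWithinAt)
      (fun x _ => norm_toEuclideanCLM_softmaxJacobian_le (softmaxE_mem_stdSimplex x))
      (Set.mem_univ z') (Set.mem_univ z)
end

section
/- Tangent entropy curvature bound: for every x in the relative interior of the n-simplex (all xᵢ > 0, Σᵢ xᵢ = 1) and every v ∈ ℝⁿ with Σᵢ vᵢ = 0, one has Σᵢ vᵢ²/xᵢ ≥ 2 ‖v‖₂². -/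
open Finset

/-- tangent entropy curvature bound: for `x` in the relative
interior of the simplex and `v` with `Σᵢ vᵢ = 0`, `Σᵢ vᵢ²/xᵢ ≥ 2‖v‖₂²`. -/
theorem tangent_entropy_curvature {n : ℕ} (x v : Fin n → ℝ)
    (hx : ∀ i, 0 < x i) (hsum : ∑ i, x i = 1) (hv : ∑ i, v i = 0) :
    2 * ∑ i, (v i) ^ 2 ≤ ∑ i, (v i) ^ 2 / x i := by
  set S : ℝ := ∑ i, |v i| with hS
  -- Step 1 : Cauchy-Schwarz gives S^2 ≤ ∑ v²/x
  have cs := Finset.sum_mul_sq_le_sq_mul_sq Finset.univ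
      (fun i => Real.sqrt (x i)) (fun i => |v i| / Real.sqrt (x i))
  have hstep1 : S ^ 2 ≤ ∑ i, (v i) ^ 2 / x i := by
    have h1 : ∀ i : Fin n, Real.sqrt (x i) * (|v i| / Real.sqrt (x i)) = |v i| := by
      intro i
      have hs : Real.sqrt (x i) ≠ 0 :=
        ne_of_gt (Real.sqrt_pos.mpr (hx i))
      field_simp
    have h2 : ∀ i : Fin n, Real.sqrt (x i) ^ 2 = x i := fun i =>
      Real.sq_sqrt (hx i).le
    have h3 : ∀ i : Fin n, (|v i| / Real.sqrt (x i)) ^ 2 = (v i) ^ 2 / x i := by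
      intro i
      rw [div_pow, sq_abs, h2]
    calc S ^ 2 = (∑ i, Real.sqrt (x i) * (|v i| / Real.sqrt (x i))) ^ 2 := by
          rw [hS]; congr 1; exact Finset.sum_congr rfl fun i _ => (h1 i).symm
      _ ≤ (∑ i, Real.sqrt (x i) ^ 2) * ∑ i, (|v i| / Real.sqrt (x i)) ^ 2 := cs
      _ = (∑ i, x i) * ∑ i, (v i) ^ 2 / x i := by
          rw [Finset.sum_congr rfl fun i _ => h2 i,
            Finset.sum_congr rfl fun i _ => h3 i]
      _ = ∑ i, (v i) ^ 2 / x i := by rw [hsum, one_mul]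
  -- Step 2 : 2 ∑ v² ≤ S²
  have ha : ∀ i ∈ Finset.univ (α := Fin n), (0:ℝ) ≤ |v i| + v i := fun i _ => by
    have := abs_nonneg (v i); have := neg_abs_le (v i); linarith
  have hb : ∀ i ∈ Finset.univ (α := Fin n), (0:ℝ) ≤ |v i| - v i := fun i _ => by
    have := le_abs_self (v i); linarith
  have hA := Finset.sum_sq_le_sq_sum_of_nonneg ha
  have hB := Finset.sum_sq_le_sq_sum_of_nonneg hb
  have hsa : ∑ i, (|v i| + v i) = S := by
    rw [Finset.sum_add_distrib, hv, add_zero]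
  have hsb : ∑ i, (|v i| - v i) = S := by
    rw [Finset.sum_sub_distrib, hv, sub_zero]
  rw [hsa] at hA
  rw [hsb] at hB
  have hab : ∑ i, ((|v i| + v i) ^ 2 + (|v i| - v i) ^ 2) = 4 * ∑ i, (v i) ^ 2 := by
    rw [Finset.mul_sum]
    refine Finset.sum_congr rfl fun i _ => ?_
    have := sq_abs (v i)
    ring_nf
    nlinarith [sq_abs (v i)]
  have h4 : 4 * ∑ i, (v i) ^ 2 ≤ 2 * S ^ 2 := by
    rw [← hab, Finset.sum_add_distrib]
    linarith
  linarith
end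

section
/- If 0 < a ≤ 1, then the only solution of m = tanh(a m) with m ∈ ℝ is m = 0. -/
/-! `|tanh x| < |x|` for `x ≠ 0`, because `sinh x < x cosh x` for `x > 0`. Hence a nonzero
solution would satisfy `|m| = |tanh (a m)| < |a m| ≤ |m|`. -/

namespace Real

theorem sinh_lt_mul_cosh {x : ℝ} (hx : 0 < x) : sinh x < x * cosh x := by
  -- `y ↦ y cosh y - sinh y` vanishes at `0` and has derivative `y sinh y > 0` for `y > 0`.
  have hmono : StrictMonoOn (fun y : ℝ => y * cosh y - sinh y) (Set.Ici 0) := by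
    refine strictMonoOn_of_deriv_pos (convex_Ici 0) (by fun_prop) fun y hy => ?_
    rw [interior_Ici] at hy
    have hderiv : HasDerivAt (fun y : ℝ => y * cosh y - sinh y)
        (1 * cosh y + y * sinh y - cosh y) y :=
      ((hasDerivAt_id y).mul (hasDerivAt_cosh y)).sub (hasDerivAt_sinh y)
    rw [hderiv.deriv, one_mul, add_sub_cancel_left]
    exact mul_pos hy (sinh_pos_iff.2 hy)
  have h := hmono (Set.mem_Ici.2 le_rfl) hx.le hx
  simp only [zero_mul, sinh_zero, sub_zero] at h
  linarith

theorem tanh_lt_self {x : ℝ} (hx : 0 < x) : tanh x < x := by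
  rw [tanh_eq_sinh_div_cosh, div_lt_iff₀ (cosh_pos x)]
  exact sinh_lt_mul_cosh hx

theorem tanh_nonneg {x : ℝ} (hx : 0 ≤ x) : 0 ≤ tanh x := by
  rw [tanh_eq_sinh_div_cosh]
  exact div_nonneg (sinh_nonneg_iff.2 hx) (cosh_pos x).le

theorem abs_tanh_lt_abs {x : ℝ} (hx : x ≠ 0) : |tanh x| < |x| := by
  have of_pos : ∀ y : ℝ, 0 < y → |tanh y| < |y| := fun y hy => by
    rw [abs_of_nonneg (tanh_nonneg hy.le), abs_of_pos hy]
    exact tanh_lt_self hy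
  rcases hx.lt_or_gt with hneg | hx'
  · simpa only [tanh_neg, abs_neg] using of_pos (-x) (neg_pos.2 hneg)
  · exact of_pos x hx'

theorem eq_zero_of_eq_tanh_mul {a m : ℝ} (ha : |a| ≤ 1) (hm : m = tanh (a * m)) : m = 0 := by
  by_contra hm0
  have ham : a * m ≠ 0 := fun h => hm0 (by rw [hm, h, tanh_zero])
  have : |m| < |m| :=
    calc |m| = |tanh (a * m)| := by rw [← hm]
      _ < |a * m| := abs_tanh_lt_abs ham
      _ = |a| * |m| := abs_mul a m
      _ ≤ |m| := mul_le_of_le_one_left (abs_nonneg m) ha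
  exact lt_irrefl _ this

end Real

/-- if `0 < a ≤ 1`, the only solution of `m = tanh(a m)` is `m = 0`. -/
theorem tanh_fixed_point_unique (a : ℝ) (ha : 0 < a) (ha1 : a ≤ 1)
    (m : ℝ) (hm : m = Real.tanh (a * m)) : m = 0 :=
  Real.eq_zero_of_eq_tanh_mul (abs_le.2 ⟨by linarith, ha1⟩) hm
end

section
/- If a > 1, the equation m = tanh(a m) has exactly three solutions in [−1, 1]: m = 0 and a pair ±m_a with m_a ∈ (0, 1). -/
/-!
The function `m ↦ tanh (a m) - m` vanishes at `0`, has slope `a - 1 > 0` there and is negative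
at `1`, so the intermediate value theorem gives a root `m_a ∈ (0, 1)`. A positive root is a point
where `tanh x / x` takes the value `1 / a` at `x = a m`; since `tanh x / x` is strictly decreasing
on `(0, ∞)`, there is only one. Oddness of `tanh` yields the negative root `-m_a`.
-/

open Real Set Filter Topology

namespace Real

theorem hasDerivAt_tanh (x : ℝ) : HasDerivAt tanh (1 / cosh x ^ 2) x := by
  have h := (hasDerivAt_sinh x).div (hasDerivAt_cosh x) (cosh_pos x).ne'
  rw [show tanh = fun y => sinh y / cosh y from funext tanh_eq_sinh_div_cosh]
  refine h.congr_deriv ?_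
  rw [← cosh_sq_sub_sinh_sq x]
  ring

@[fun_prop]
theorem continuous_tanh : Continuous tanh :=
  continuous_iff_continuousAt.2 fun x => (hasDerivAt_tanh x).continuousAt

theorem strictAntiOn_tanh_div_self : StrictAntiOn (fun x => tanh x / x) (Ioi 0) := by
  have hderiv (x : ℝ) (hx : 0 < x) : HasDerivAt (fun x => tanh x / x)
      ((1 / cosh x ^ 2 * x - tanh x * 1) / x ^ 2) x :=
    (hasDerivAt_tanh x).div (hasDerivAt_id x) hx.ne'
  refine strictAntiOn_of_deriv_neg (convex_Ioi 0)
    (fun x hx => (hderiv x hx).continuousAt.continuousWithinAt) fun x hx => ?_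
  rw [interior_Ioi] at hx
  rw [(hderiv x hx).deriv]
  refine div_neg_of_neg_of_pos ?_ (pow_pos hx 2)
  -- the numerator has the sign of `x - sinh x * cosh x`
  have hcosh := cosh_pos x
  have hx_lt : x < sinh x * cosh x :=
    calc x < sinh x := self_lt_sinh_iff.2 hx
      _ ≤ sinh x * cosh x := le_mul_of_one_le_right (hx.trans (self_lt_sinh_iff.2 hx)).le
          (one_le_cosh x)
  rw [tanh_eq_sinh_div_cosh, sub_neg, mul_one, div_mul_eq_mul_div, div_lt_div_iff₀
    (pow_pos hcosh 2) hcosh]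
  nlinarith

end Real

section FixedPoints

variable {a : ℝ}

theorem eq_of_tanh_mul_eq_self (ha : 0 < a) {m m' : ℝ} (hm : 0 < m) (hm' : 0 < m')
    (h : tanh (a * m) = m) (h' : tanh (a * m') = m') : m = m' := by
  have hslope {m : ℝ} (hm : 0 < m) (h : tanh (a * m) = m) : tanh (a * m) / (a * m) = 1 / a := by
    rw [h]; field_simp
  refine mul_left_cancel₀ ha.ne' (strictAntiOn_tanh_div_self.injOn (mul_pos ha hm)
    (mul_pos ha hm') ?_)
  simp only [hslope hm h, hslope hm' h']

theorem exists_lt_tanh_mul_self (ha : 1 < a) : ∃ m ∈ Ioo 0 1, m < tanh (a * m) := by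
  have hderiv : HasDerivAt (fun m => tanh (a * m)) a 0 := by
    simpa [Function.comp_def] using
      (hasDerivAt_tanh (a * 0)).comp 0 ((hasDerivAt_id 0).const_mul a)
  have hslope : Tendsto (fun m => tanh (a * m) / m) (𝓝[>] 0) (𝓝 a) := by
    refine ((hasDerivAt_iff_tendsto_slope.1 hderiv).mono_left
      (nhdsWithin_mono 0 fun x (hx : 0 < x) => hx.ne')).congr fun m => ?_
    simp [slope_def_field]
  obtain ⟨m, ⟨hm_slope, hm_lt⟩, hm_pos⟩ :=
    ((hslope.eventually_const_lt ha).and (eventually_nhdsWithin_of_eventually_nhds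
      (eventually_lt_nhds (one_pos : (0 : ℝ) < 1))) |>.and self_mem_nhdsWithin).exists
  exact ⟨m, ⟨hm_pos, hm_lt⟩, by rwa [one_lt_div (mem_Ioi.1 hm_pos)] at hm_slope⟩

theorem exists_tanh_mul_eq_self (ha : 1 < a) : ∃ m ∈ Ioo 0 1, tanh (a * m) = m := by
  obtain ⟨m₀, ⟨hm₀_pos, hm₀_lt⟩, hm₀⟩ := exists_lt_tanh_mul_self ha
  have hcont : ContinuousOn (fun m => tanh (a * m) - m) (Icc m₀ 1) := by fun_prop
  have hzero : (0 : ℝ) ∈ Ioo (tanh (a * 1) - 1) (tanh (a * m₀) - m₀) :=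
    ⟨by linarith [tanh_lt_one (a * 1)], by linarith⟩
  obtain ⟨m, hm, hm_eq⟩ := intermediate_value_Ioo' hm₀_lt.le hcont hzero
  exact ⟨m, ⟨hm₀_pos.trans hm.1, hm.2⟩, sub_eq_zero.1 hm_eq⟩

end FixedPoints

/-- for `a > 1`, the equation `m = tanh(a m)` has exactly three
solutions in `[−1, 1]`: `0` and a pair `±m_a` with `m_a ∈ (0,1)`. -/
theorem tanh_fixed_points_three (a : ℝ) (ha : 1 < a) :
    ∃ ma : ℝ, ma ∈ Set.Ioo (0 : ℝ) 1 ∧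
      {m : ℝ | m ∈ Set.Icc (-1 : ℝ) 1 ∧ m = Real.tanh (a * m)}
        = {-ma, 0, ma} := by
  obtain ⟨ma, ⟨hma_pos, hma_lt⟩, hma⟩ := exists_tanh_mul_eq_self ha
  have ha_pos : 0 < a := one_pos.trans ha
  refine ⟨ma, ⟨hma_pos, hma_lt⟩, ?_⟩
  ext m
  simp only [mem_ofPred_eq, mem_insert_iff, mem_singleton_iff, mem_Icc]
  constructor
  · rintro ⟨-, hm⟩
    rcases lt_trichotomy m 0 with hneg | rfl | hpos
    · have := eq_of_tanh_mul_eq_self ha_pos (neg_pos.2 hneg) hma_pos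
        (by rw [mul_neg, tanh_neg, ← hm]) hma
      exact Or.inl (by linarith)
    · exact Or.inr (Or.inl rfl)
    · exact Or.inr (Or.inr (eq_of_tanh_mul_eq_self ha_pos hpos hma_pos hm.symm hma))
  · rintro (rfl | rfl | rfl)
    · exact ⟨⟨by linarith, by linarith⟩, by rw [mul_neg, tanh_neg, hma]⟩
    · simp
    · exact ⟨⟨by linarith, hma_lt.le⟩, hma.symm⟩
end

section
/- For the two-action model with W = [[0,−1],[−1,0]]: if 0 < β ≤ 2 the map F_β(x) = σ(βWx) has a unique fixed point in the 2-simplex, namely the uniform distribution (1/2, 1/2); if β > 2 it has exactly three fixed points. -/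
/-!
Write a point of the simplex as `((1 + m) / 2, (1 - m) / 2)`. The fixed-point equation becomes
`log (1 + m) - log (1 - m) = β m`, i.e. `m = tanh (β m / 2)`. The odd function
`g m = log (1 + m) - log (1 - m) - β m` has `g' m = 2 / (1 - m ^ 2) - β`. For `β ≤ 2` it is strictly
increasing on `[0, 1)`, so `0` is its only zero. For `β > 2` it is strictly convex on `[0, 1)`,
negative just to the right of `0` and unbounded near `1`, so it has exactly one zero `r` in
`(0, 1)`, and its zeros are `-r, 0, r`.
-/

open Finset Matrix

/-- Softmax on `ℝⁿ`. -/
noncomputable def softmax {n : ℕ} (z : Fin n → ℝ) : Fin n → ℝ :=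
  fun i => Real.exp (z i) / ∑ j, Real.exp (z j)

/-- The fixed points of the two-action logit feedback map
`F_β(x) = σ(βWx)`, `W = [[0,−1],[−1,0]]`, in the 2-simplex. -/
def twoActionFixedPoints (β : ℝ) : Set (Fin 2 → ℝ) :=
  {x | (∀ i, 0 ≤ x i) ∧ x 0 + x 1 = 1
      ∧ softmax (β • (!![0, -1; -1, 0].mulVec x)) = x}

open Real

lemma softmax_fin_two_eq_iff {z x : Fin 2 → ℝ} (hx : x 0 + x 1 = 1) :
    softmax z = x ↔ x 1 * exp (z 0) = x 0 * exp (z 1) := by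
  have hD : exp (z 0) + exp (z 1) ≠ 0 := by positivity
  rw [funext_iff, Fin.forall_fin_two]
  simp only [softmax, Fin.sum_univ_two, div_eq_iff hD]
  constructor
  · rintro ⟨h0, -⟩
    linear_combination h0 + exp (z 0) * hx
  · intro h
    exact ⟨by linear_combination h - exp (z 0) * hx, by linear_combination -h - exp (z 1) * hx⟩

namespace TwoActionLogit

noncomputable def residual (β m : ℝ) : ℝ := log (1 + m) - log (1 - m) - β * m

noncomputable def profile (m : ℝ) : Fin 2 → ℝ := ![(1 + m) / 2, (1 - m) / 2]

lemma residual_eq_zero_iff {β m : ℝ} (hm : m ∈ Set.Ioo (-1) 1) :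
    residual β m = 0 ↔ 1 + m = (1 - m) * exp (β * m) := by
  have h₁ : 0 < 1 + m := by linarith [hm.1]
  have h₂ : 0 < 1 - m := by linarith [hm.2]
  rw [residual, sub_sub, sub_eq_zero, ← exp_eq_exp, exp_add, exp_log h₁, exp_log h₂]

lemma profile_mem_twoActionFixedPoints_iff {β m : ℝ} :
    profile m ∈ twoActionFixedPoints β ↔ m ∈ Set.Ioo (-1) 1 ∧ residual β m = 0 := by
  have hsum : profile m 0 + profile m 1 = 1 := by simp [profile]; ring
  have hfix : (1 - m) / 2 * exp (-(β * ((1 - m) / 2))) = (1 + m) / 2 * exp (-(β * ((1 + m) / 2)))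
      ↔ 1 + m = (1 - m) * exp (β * m) := by
    set F := exp (-(β * ((1 + m) / 2)))
    have hexp : exp (-(β * ((1 - m) / 2))) = exp (β * m) * F := by
      rw [← exp_add]; ring_nf
    have hF : F / 2 ≠ 0 := by positivity
    rw [hexp]
    constructor <;> intro h
    · exact mul_right_cancel₀ hF (by linear_combination -h)
    · linear_combination (-F / 2) * h
  have hz : β • (!![0, -1; -1, 0] *ᵥ profile m) =
      ![-(β * ((1 - m) / 2)), -(β * ((1 + m) / 2))] := by
    ext i; fin_cases i <;> simp [profile]
  rw [twoActionFixedPoints, Set.mem_ofPred_eq, softmax_fin_two_eq_iff hsum, hz]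
  simp only [profile, Fin.forall_fin_two, cons_val_zero, cons_val_one, cons_val_fin_one,
    Set.mem_Ioo]
  rw [hfix]
  constructor
  · rintro ⟨⟨h₁, h₂⟩, -, h⟩
    have hm : m ∈ Set.Ioo (-1) 1 :=
      ⟨by nlinarith [exp_pos (β * m)], by nlinarith [exp_pos (β * m)]⟩
    exact ⟨hm, (residual_eq_zero_iff hm).2 h⟩
  · rintro ⟨hm, h⟩
    exact ⟨⟨by linarith [hm.1], by linarith [hm.2]⟩, by ring, (residual_eq_zero_iff hm).1 h⟩

lemma profile_injective : Function.Injective profile := fun m n h => by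
  have h0 := congrFun h 0
  simp only [profile, cons_val_zero] at h0
  linarith

lemma profile_zero : profile 0 = ![1 / 2, 1 / 2] := by norm_num [profile]

lemma eq_profile_of_add_eq_one {x : Fin 2 → ℝ} (hx : x 0 + x 1 = 1) : x = profile (x 0 - x 1) := by
  ext i; fin_cases i <;> simp [profile] <;> linarith

lemma twoActionFixedPoints_eq_image (β : ℝ) :
    twoActionFixedPoints β = profile '' {m ∈ Set.Ioo (-1) 1 | residual β m = 0} := by
  ext x
  constructor
  · intro hx
    have hx' := eq_profile_of_add_eq_one hx.2.1
    exact ⟨x 0 - x 1, profile_mem_twoActionFixedPoints_iff.1 (hx' ▸ hx), hx'.symm⟩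
  · rintro ⟨m, hm, rfl⟩
    exact profile_mem_twoActionFixedPoints_iff.2 hm

lemma residual_zero (β : ℝ) : residual β 0 = 0 := by simp [residual]

lemma residual_neg (β m : ℝ) : residual β (-m) = -residual β m := by
  simp only [residual, ← sub_eq_add_neg, sub_neg_eq_add]; ring

lemma residual_abs_eq_zero {β m : ℝ} (h : residual β m = 0) : residual β |m| = 0 := by
  rcases abs_choice m with hm | hm <;> rw [hm]
  · exact h
  · rw [residual_neg, h, neg_zero]

lemma hasDerivAt_residual (β : ℝ) {m : ℝ} (hm : m ∈ Set.Ioo (-1) 1) :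
    HasDerivAt (residual β) (2 / (1 - m ^ 2) - β) m := by
  have h₁ : 1 + m ≠ 0 := by linarith [hm.1]
  have h₂ : 1 - m ≠ 0 := by linarith [hm.2]
  have := ((((hasDerivAt_id m).const_add 1).log h₁).sub
    (((hasDerivAt_id m).const_sub 1).log h₂)).sub ((hasDerivAt_id m).const_mul β)
  refine this.congr_deriv ?_
  have h₃ : 1 - m ^ 2 = (1 + m) * (1 - m) := by ring
  rw [id, h₃]
  field_simp
  ring

lemma continuousOn_residual (β : ℝ) : ContinuousOn (residual β) (Set.Ioo (-1) 1) :=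
  fun _ hm => (hasDerivAt_residual β hm).continuousAt.continuousWithinAt

lemma residual_pos_of_le_two {β m : ℝ} (hβ : β ≤ 2) (hm : m ∈ Set.Ioo 0 1) : 0 < residual β m := by
  have hmono : StrictMonoOn (residual β) (Set.Ico 0 1) := by
    refine strictMonoOn_of_deriv_pos (convex_Ico 0 1)
      ((continuousOn_residual β).mono fun x hx => ⟨by linarith [hx.1], hx.2⟩) fun x hx => ?_
    rw [interior_Ico] at hx
    rw [(hasDerivAt_residual β ⟨by linarith [hx.1], hx.2⟩).deriv, sub_pos]
    calc β ≤ 2 := hβ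
      _ < 2 / (1 - x ^ 2) := by
        rw [lt_div_iff₀ (by nlinarith [hx.1, hx.2])]; nlinarith [hx.1]
  simpa [residual_zero] using hmono ⟨le_rfl, one_pos⟩ ⟨hm.1.le, hm.2⟩ hm.1

lemma strictConvexOn_residual (β : ℝ) : StrictConvexOn ℝ (Set.Ico 0 1) (residual β) := by
  refine StrictMonoOn.strictConvexOn_of_deriv (convex_Ico 0 1)
    ((continuousOn_residual β).mono fun x hx => ⟨by linarith [hx.1], hx.2⟩) ?_
  rw [interior_Ico]
  intro x hx y hy hxy
  rw [(hasDerivAt_residual β ⟨by linarith [hx.1], hx.2⟩).deriv,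
    (hasDerivAt_residual β ⟨by linarith [hy.1], hy.2⟩).deriv]
  gcongr 2 / ?_ - β
  · nlinarith [hy.1, hy.2]
  · nlinarith [hx.1]

lemma residual_lt_zero_of_lt_of_residual_eq_zero {β r s : ℝ} (hr : 0 < r) (hrs : r < s)
    (hs : s < 1) (hs0 : residual β s = 0) : residual β r < 0 := by
  have hs₀ : 0 < s := hr.trans hrs
  have := (strictConvexOn_residual β).lt_on_openSegment (x := 0) (y := s) ⟨le_rfl, one_pos⟩
    ⟨hs₀.le, hs⟩ hs₀.ne (by rw [openSegment_eq_Ioo hs₀]; exact ⟨hr, hrs⟩)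
  rwa [residual_zero, hs0, max_self] at this

lemma eq_of_residual_eq_zero {β r s : ℝ} (hr : r ∈ Set.Ioo 0 1) (hs : s ∈ Set.Ioo 0 1)
    (hr0 : residual β r = 0) (hs0 : residual β s = 0) : r = s := by
  rcases lt_trichotomy r s with h | h | h
  · exact absurd hr0 (residual_lt_zero_of_lt_of_residual_eq_zero hr.1 h hs.2 hs0).ne
  · exact h
  · exact absurd hs0 (residual_lt_zero_of_lt_of_residual_eq_zero hs.1 h hr.2 hr0).ne

lemma exists_residual_lt_zero {β : ℝ} (hβ : 2 < β) : ∃ m ∈ Set.Ioo 0 1, residual β m < 0 := by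
  -- `s` lies below the critical point `√(1 - 2 / β)` of `residual β`, since `s ^ 2 < s`.
  set s := 1 - 2 / β
  have hs : s ∈ Set.Ioo 0 1 := by
    have : 0 < 2 / β := by positivity
    have : 2 / β < 1 := (div_lt_one (by linarith)).2 hβ
    exact ⟨by linarith, by linarith⟩
  have hanti : StrictAntiOn (residual β) (Set.Icc 0 s) := by
    refine strictAntiOn_of_deriv_neg (convex_Icc 0 s)
      ((continuousOn_residual β).mono fun x hx => ⟨by linarith [hx.1], by linarith [hx.2, hs.2]⟩)
      fun x hx => ?_
    rw [interior_Icc] at hx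
    rw [(hasDerivAt_residual β ⟨by linarith [hx.1], by linarith [hx.2, hs.2]⟩).deriv, sub_neg,
      div_lt_iff₀ (by nlinarith [hx.1, hx.2, hs.2])]
    have hβs : β * s = β - 2 := by simp only [s]; field_simp
    nlinarith [hx.1, hx.2, hs.2]
  refine ⟨s, hs, ?_⟩
  simpa [residual_zero] using hanti ⟨le_rfl, hs.1.le⟩ ⟨hs.1.le, le_rfl⟩ hs.1

lemma exists_residual_pos (β : ℝ) : ∃ m ∈ Set.Ioo 0 1, 0 < residual β m := by
  set ε := exp (-(|β| + 1))
  have hε : ε ∈ Set.Ioo 0 1 := ⟨exp_pos _, exp_lt_one_iff.2 (by linarith [abs_nonneg β])⟩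
  refine ⟨1 - ε, ⟨by linarith [hε.2], by linarith [hε.1]⟩, ?_⟩
  have hlog : 0 < log (1 + (1 - ε)) := log_pos (by linarith [hε.2])
  have hβε : β * (1 - ε) ≤ |β| := by
    nlinarith [mul_nonneg (sub_nonneg.2 (le_abs_self β)) (sub_nonneg.2 hε.2.le),
      mul_nonneg (abs_nonneg β) hε.1.le]
  rw [residual, sub_sub_cancel, log_exp]
  linarith

lemma exists_residual_eq_zero {β : ℝ} (hβ : 2 < β) : ∃ r ∈ Set.Ioo 0 1, residual β r = 0 := by
  obtain ⟨a, ha, hneg⟩ := exists_residual_lt_zero hβ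
  obtain ⟨b, hb, hpos⟩ := exists_residual_pos β
  have hab : Set.uIcc a b ⊆ Set.Ioo 0 1 := Set.ordConnected_Ioo.uIcc_subset ha hb
  obtain ⟨r, hr, hr0⟩ := intermediate_value_uIcc
    ((continuousOn_residual β).mono (hab.trans (Set.Ioo_subset_Ioo_left (by norm_num))))
    (Set.mem_uIcc.2 (Or.inl ⟨hneg.le, hpos.le⟩))
  exact ⟨r, hab hr, hr0⟩

lemma residual_zeros_of_le_two {β : ℝ} (hβ : β ≤ 2) :
    {m ∈ Set.Ioo (-1) 1 | residual β m = 0} = {0} := by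
  ext m
  simp only [Set.mem_sep_iff, Set.mem_singleton_iff]
  constructor
  · rintro ⟨hm, h⟩
    by_contra hm0
    exact (residual_pos_of_le_two hβ ⟨abs_pos.2 hm0, abs_lt.2 hm⟩).ne' (residual_abs_eq_zero h)
  · rintro rfl
    exact ⟨by norm_num, residual_zero β⟩

lemma residual_zeros_of_two_lt {β : ℝ} (hβ : 2 < β) :
    ∃ r ∈ Set.Ioo 0 1, {m ∈ Set.Ioo (-1) 1 | residual β m = 0} = {-r, 0, r} := by
  obtain ⟨r, hr, hr0⟩ := exists_residual_eq_zero hβ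
  refine ⟨r, hr, Set.ext fun m => ?_⟩
  simp only [Set.mem_sep_iff, Set.mem_insert_iff, Set.mem_singleton_iff]
  constructor
  · rintro ⟨hm, h⟩
    by_cases hm0 : m = 0
    · exact Or.inr (Or.inl hm0)
    have habs : |m| = r :=
      eq_of_residual_eq_zero ⟨abs_pos.2 hm0, abs_lt.2 hm⟩ hr (residual_abs_eq_zero h) hr0
    rcases (abs_eq hr.1.le).1 habs with h | h
    · exact Or.inr (Or.inr h)
    · exact Or.inl h
  · rintro (rfl | rfl | rfl)
    · exact ⟨⟨by linarith [hr.2], by linarith [hr.1]⟩, by rw [residual_neg, hr0, neg_zero]⟩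
    · exact ⟨by norm_num, residual_zero β⟩
    · exact ⟨⟨by linarith [hr.1], hr.2⟩, hr0⟩

end TwoActionLogit

open TwoActionLogit

theorem two_action_fixed_point_phase_diagram_general (β : ℝ) :
    (β ≤ 2 → twoActionFixedPoints β = {![1 / 2, 1 / 2]})
    ∧ (2 < β → ∃ x y z : Fin 2 → ℝ, x ≠ y ∧ x ≠ z ∧ y ≠ z ∧
        twoActionFixedPoints β = {x, y, z}) := by
  refine ⟨fun hβ => ?_, fun hβ => ?_⟩
  · rw [twoActionFixedPoints_eq_image, residual_zeros_of_le_two hβ, Set.image_singleton,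
      profile_zero]
  · obtain ⟨r, hr, hzeros⟩ := residual_zeros_of_two_lt hβ
    refine ⟨profile (-r), profile 0, profile r, profile_injective.ne ?_,
      profile_injective.ne ?_, profile_injective.ne ?_, ?_⟩
    · linarith [hr.1]
    · linarith [hr.1]
    · linarith [hr.1]
    · rw [twoActionFixedPoints_eq_image, hzeros, Set.image_insert_eq, Set.image_insert_eq,
        Set.image_singleton]

/-- for `0 < β ≤ 2` the two-action logit map has the uniform
distribution as its unique fixed point; for `β > 2` it has exactly three
fixed points. -/
theorem two_action_fixed_point_phase_diagram (β : ℝ) (hβ : 0 < β) :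
    (β ≤ 2 → twoActionFixedPoints β = {![1 / 2, 1 / 2]})
    ∧ (2 < β → ∃ x y z : Fin 2 → ℝ, x ≠ y ∧ x ≠ z ∧ y ≠ z ∧
        twoActionFixedPoints β = {x, y, z}) :=
  two_action_fixed_point_phase_diagram_general β
end
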